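/- For a linear map E between matrix spaces with decoherent action S (S_{ij} = ⟨i|E(|j⟩⟨j|)|i⟩), complete dephasing on both sides gives ‖D ∘ E ∘ D‖_{1→1} = ‖S‖_{1→1}, where the left side is the operator norm induced by the trace norm and the right side the operator norm of S between ℓ₁ sequence spaces. -/

import Mathlib

open scoped ComplexOrder

/-- The trace norm `‖A‖₁ = Tr √(Aᴴ A)`. -/
noncomputable def traceNorm {n : ℕ} (A : Matrix (Fin n) (Fin n) ℂ) : ℝ :=
  ((Matrix.posSemidef_conjTranspose_mul_self A).1.eigenvectorUnitary.1 *
    Matrix.diagonal (((↑) : ℝ → ℂ) ∘ (√·) ∘ (Matrix.posSemidef_conjTranspose_mul_self A).1.eigenvalues) *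
    (star (Matrix.posSemidef_conjTranspose_mul_self A).1.eigenvectorUnitary :
      Matrix (Fin n) (Fin n) ℂ)).trace.re

/-- The completely dephasing map, keeping only the diagonal. -/
def dephase {n : ℕ} (X : Matrix (Fin n) (Fin n) ℂ) : Matrix (Fin n) (Fin n) ℂ :=
  Matrix.diagonal fun i => X i i

/-!
`D ∘ E ∘ D` maps `x` to the diagonal matrix with diagonal `S (diag x)`, and the trace norm of a
diagonal matrix is the `ℓ₁` norm of its diagonal. Hence the two sets of values coincide: every
`a` in the `ℓ₁` unit ball is the diagonal of `diagonal a`, which lies in the trace-norm unit ball,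
and conversely `∑ j, ‖x j j‖ ≤ ‖x‖₁` (pinching), proved by writing `x = (x V) Vᴴ` with `V`
diagonalizing `xᴴ x` and applying Cauchy–Schwarz column by column.
-/

namespace Matrix

variable {𝕜 : Type*} [RCLike 𝕜] {m n : Type*} [Fintype m]

lemma re_conjTranspose_mul_self_apply (M : Matrix m n 𝕜) (k : n) :
    RCLike.re ((Mᴴ * M) k k) = ∑ j, ‖M j k‖ ^ 2 := by
  simp only [mul_apply, conjTranspose_apply, map_sum, RCLike.star_def, RCLike.conj_mul]
  norm_cast

variable [Fintype n]

lemma sum_norm_diag_mul_conjTranspose_le (u V : Matrix m n 𝕜) :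
    ∑ j, ‖(u * Vᴴ) j j‖ ≤ ∑ k, √(∑ j, ‖u j k‖ ^ 2) * √(∑ j, ‖V j k‖ ^ 2) :=
  calc ∑ j, ‖(u * Vᴴ) j j‖
      ≤ ∑ j, ∑ k, ‖u j k‖ * ‖V j k‖ := Finset.sum_le_sum fun j _ ↦
        (norm_sum_le _ _).trans_eq (by simp only [conjTranspose_apply, norm_mul, norm_star])
    _ = ∑ k, ∑ j, ‖u j k‖ * ‖V j k‖ := Finset.sum_comm
    _ ≤ ∑ k, √(∑ j, ‖u j k‖ ^ 2) * √(∑ j, ‖V j k‖ ^ 2) :=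
        Finset.sum_le_sum fun k _ ↦ Real.sum_mul_le_sqrt_mul_sqrt _ _ _

variable [DecidableEq n]

lemma IsHermitian.conjTranspose_eigenvectorUnitary_mul_mul {A : Matrix n n 𝕜}
    (hA : A.IsHermitian) :
    (hA.eigenvectorUnitary : Matrix n n 𝕜)ᴴ * A * (hA.eigenvectorUnitary : Matrix n n 𝕜) =
      diagonal (RCLike.ofReal ∘ hA.eigenvalues) := by
  simpa [Unitary.conjStarAlgAut_star_apply, star_eq_conjTranspose] using
    hA.conjStarAlgAut_star_eigenvectorUnitary

lemma IsHermitian.sum_comp_eigenvalues_of_eq_diagonal {A : Matrix n n 𝕜} (hA : A.IsHermitian)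
    {d : n → ℝ} (hd : A = diagonal fun i ↦ (d i : 𝕜)) (f : ℝ → ℝ) :
    ∑ k, f (hA.eigenvalues k) = ∑ i, f (d i) := by
  have hroots : Multiset.map (RCLike.ofReal ∘ hA.eigenvalues) Finset.univ.val
      = Multiset.map (fun i ↦ (d i : 𝕜)) Finset.univ.val := by
    rw [← hA.roots_charpoly_eq_eigenvalues, hd, charpoly_diagonal, Polynomial.roots_prod _ _
      (Finset.prod_ne_zero_iff.mpr fun i _ ↦ Polynomial.X_sub_C_ne_zero _)]
    simp only [Polynomial.roots_X_sub_C, Multiset.bind_singleton]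
  simpa [Multiset.map_map, Function.comp_def] using
    congrArg (fun s ↦ (s.map (f ∘ (RCLike.re : 𝕜 → ℝ))).sum) hroots

end Matrix

open Matrix

lemma traceNorm_eq_sum_sqrt_eigenvalues {n : ℕ} (x : Matrix (Fin n) (Fin n) ℂ) :
    traceNorm x = ∑ k, √((isHermitian_conjTranspose_mul_self x).eigenvalues k) := by
  rw [traceNorm, trace_mul_cycle, Unitary.coe_star_mul_self, one_mul, trace_diagonal,
    Complex.re_sum]
  simp

lemma traceNorm_diagonal {n : ℕ} (a : Fin n → ℂ) : traceNorm (diagonal a) = ∑ i, ‖a i‖ := by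
  have hsq : (diagonal a)ᴴ * diagonal a = diagonal fun i ↦ ((‖a i‖ ^ 2 : ℝ) : ℂ) := by
    simp [diagonal_conjTranspose, Complex.conj_mul']
  rw [traceNorm_eq_sum_sqrt_eigenvalues,
    IsHermitian.sum_comp_eigenvalues_of_eq_diagonal (d := fun i ↦ ‖a i‖ ^ 2) _ hsq]
  simp only [Real.sqrt_sq (norm_nonneg _)]

lemma sum_norm_diag_le_traceNorm {n : ℕ} (x : Matrix (Fin n) (Fin n) ℂ) :
    ∑ j, ‖x j j‖ ≤ traceNorm x := by
  set hH := isHermitian_conjTranspose_mul_self x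
  set V : Matrix (Fin n) (Fin n) ℂ := ↑hH.eigenvectorUnitary
  have hx : x * V * Vᴴ = x := by
    rw [mul_assoc, ← star_eq_conjTranspose, Unitary.mul_star_self_of_mem hH.eigenvectorUnitary.2,
      mul_one]
  have hxV : ∀ k, ∑ j, ‖(x * V) j k‖ ^ 2 = hH.eigenvalues k := fun k ↦ by
    rw [← re_conjTranspose_mul_self_apply, conjTranspose_mul, mul_assoc, ← mul_assoc xᴴ,
      ← mul_assoc, hH.conjTranspose_eigenvectorUnitary_mul_mul]
    simp
  have hV : ∀ k, ∑ j, ‖V j k‖ ^ 2 = 1 := fun k ↦ by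
    rw [← re_conjTranspose_mul_self_apply, ← star_eq_conjTranspose,
      Unitary.star_mul_self_of_mem hH.eigenvectorUnitary.2]
    simp
  calc ∑ j, ‖x j j‖ = ∑ j, ‖(x * V * Vᴴ) j j‖ := by rw [hx]
    _ ≤ ∑ k, √(∑ j, ‖(x * V) j k‖ ^ 2) * √(∑ j, ‖V j k‖ ^ 2) :=
        sum_norm_diag_mul_conjTranspose_le _ _
    _ = traceNorm x := by simp only [hxV, hV, Real.sqrt_one, mul_one,
        traceNorm_eq_sum_sqrt_eigenvalues]

lemma dephase_map_dephase {n m : ℕ}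
    (E : Matrix (Fin n) (Fin n) ℂ →ₗ[ℂ] Matrix (Fin m) (Fin m) ℂ) (x : Matrix (Fin n) (Fin n) ℂ) :
    dephase (E (dephase x)) = diagonal fun i ↦ ∑ j, E (single j j 1) i i * x j j := by
  have hx : dephase x = ∑ j, x j j • single j j 1 := by
    simp [dephase, smul_single, sum_single_eq_diagonal]
  rw [hx, map_sum]
  simp only [map_smul]
  simp [dephase, Matrix.sum_apply, mul_comm]

lemma traceNorm_dephase_map_dephase {n m : ℕ}
    (E : Matrix (Fin n) (Fin n) ℂ →ₗ[ℂ] Matrix (Fin m) (Fin m) ℂ)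
    (S : Matrix (Fin m) (Fin n) ℂ) (hS : ∀ i j, S i j = (E (single j j 1)) i i)
    (x : Matrix (Fin n) (Fin n) ℂ) :
    traceNorm (dephase (E (dephase x))) = ∑ i, ‖∑ j, S i j * x j j‖ := by
  simp [dephase_map_dephase, traceNorm_diagonal, hS]

/-- For a linear map `E` between matrix spaces with decoherent action
`S_{ij} = ⟨i|E(|j⟩⟨j|)|i⟩`, complete dephasing of input and output gives
`‖D ∘ E ∘ D‖_{1→1} = ‖S‖_{1→1}`: the operator norm induced by the trace norm of the
dephased map equals the `ℓ₁ → ℓ₁` operator norm of the decoherent action. -/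
theorem dephased_traceNorm_opNorm_eq_ell1_opNorm {n m : ℕ}
    (E : Matrix (Fin n) (Fin n) ℂ →ₗ[ℂ] Matrix (Fin m) (Fin m) ℂ)
    (S : Matrix (Fin m) (Fin n) ℂ)
    (hS : ∀ i j, S i j = (E (Matrix.single j j 1)) i i) :
    sSup {r : ℝ | ∃ x : Matrix (Fin n) (Fin n) ℂ,
        traceNorm x ≤ 1 ∧ r = traceNorm (dephase (E (dephase x)))}
      = sSup {r : ℝ | ∃ a : Fin n → ℂ,
        (∑ j, ‖a j‖) ≤ 1 ∧ r = ∑ i, ‖∑ j, S i j * a j‖} := by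
  congr 1
  ext r
  constructor
  · rintro ⟨x, hx, rfl⟩
    exact ⟨fun j ↦ x j j, (sum_norm_diag_le_traceNorm x).trans hx,
      traceNorm_dephase_map_dephase E S hS x⟩
  · rintro ⟨a, ha, rfl⟩
    refine ⟨diagonal a, (traceNorm_diagonal a).trans_le ha, ?_⟩
    simp [traceNorm_dephase_map_dephase E S hS]
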